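/- arXiv:1301.5104 — 5 statements merged into one kernel-verified Lean document; each statement's English description precedes it below -/
import Mathlib

section
/- If u and v are words over a finite alphabet A with |u| = |v| ≤ 2k − 1, and u and v are k-Abelian equivalent, then u = v. -/
/-!
An occurrence of `x` in `w` either is a prefix of `w` or is preceded by a unique letter, so
`occ w x = [x <+: w] + ∑ a, occ w (a :: x)`; dually for suffixes. For `|x| < k` the counts on the
right are preserved by `k`-Abelian equivalence, so `u` and `v` have the same prefixes and suffixes
of length `< k`: they share their prefix of length `k - 1` and their suffix of length
`|u| - k ≤ k - 1`. At most one position is covered by neither, and its letter is forced because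
`1`-Abelian equivalence makes `u` a permutation of `v`.
-/

/-- Number of occurrences of `x` as a factor of `w`. -/
def occ {A : Type*} [DecidableEq A] (w x : List A) : ℕ :=
  ((List.range (w.length + 1)).filter (fun i => decide (x <+: w.drop i))).length

/-- `k`-Abelian equivalence. -/
def KAbEq {A : Type*} [DecidableEq A] (k : ℕ) (u v : List A) : Prop :=
  ∀ x : List A, x ≠ [] → x.length ≤ k → occ u x = occ v x

namespace List

variable {α : Type*}

theorem eq_of_perm_of_take_eq_of_drop_succ_eq {u v : List α} (hp : u ~ v) {i : ℕ}
    (htake : u.take i = v.take i) (hdrop : u.drop (i + 1) = v.drop (i + 1)) : u = v := by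
  have split (w : List α) : w.take i ++ ((w.drop i).take 1 ++ w.drop (i + 1)) = w := by
    rw [← drop_drop, take_append_drop, take_append_drop]
  rw [← split u, ← split v, htake, hdrop] at hp ⊢
  have hmid := (perm_append_right_iff _).mp ((perm_append_left_iff _).mp hp)
  have short (w : List α) : w.take 1 = [] ∨ ∃ c, w.take 1 = [c] := by
    rcases w with _ | ⟨c, w⟩ <;> simp
  rcases short (u.drop i) with hu | ⟨c, hu⟩ <;> rw [hu] at hmid ⊢
  · rw [hmid.nil_eq]
  · rw [perm_singleton.mp hmid.symm]

theorem take_eq_take_of_take_prefix {u v : List α} (hlen : u.length = v.length) {i : ℕ}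
    (h : u.take i <+: v) : u.take i = v.take i := by
  rw [prefix_iff_eq_take.mp h, length_take, hlen, ← take_eq_take_min]

theorem drop_eq_drop_of_drop_suffix {u v : List α} (hlen : u.length = v.length) {i : ℕ}
    (h : u.drop i <:+ v) : u.drop i = v.drop i := by
  have hmin : u.length - (u.length - i) = min i u.length := by omega
  rw [suffix_iff_eq_drop.mp h, length_drop, ← hlen, hmin, hlen, ← drop_eq_drop_min]

theorem sum_ite_concat_prefix [DecidableEq α] [Fintype α] (x y : List α) :
    (∑ a : α, if x ++ [a] <+: y then 1 else 0) + (if x = y then 1 else 0) =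
      if x <+: y then 1 else 0 := by
  by_cases hxy : x <+: y
  · obtain ⟨t, rfl⟩ := hxy
    simp only [prefix_append_right_inj, prefix_append, if_true]
    rcases t with _ | ⟨b, t⟩
    · simp
    · simp [cons_prefix_cons]
  · have hxy' : x ≠ y := fun h => hxy (h ▸ prefix_refl x)
    simp only [hxy, hxy', if_false, add_zero]
    exact Finset.sum_eq_zero fun a _ => if_neg fun h => hxy ((prefix_append x [a]).trans h)

end List

section Occurrences

variable {α : Type*} [DecidableEq α]

theorem occ_nil (x : List α) : occ [] x = if x = [] then 1 else 0 := by
  by_cases hx : x = [] <;> simp [occ, hx]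

theorem occ_cons (c : α) (w x : List α) :
    occ (c :: w) x = (if x <+: c :: w then 1 else 0) + occ w x := by
  unfold occ
  rw [List.length_cons, List.range_succ_eq_map, List.filter_cons]
  by_cases hx : x <+: c :: w <;> simp [hx, List.filter_map, Function.comp_def, add_comm]

theorem occ_singleton (w : List α) (a : α) : occ w [a] = w.count a := by
  induction w with
  | nil => simp [occ_nil]
  | cons c w ih =>
    rw [occ_cons, ih, List.count_cons]
    by_cases h : a = c <;> simp [List.cons_prefix_cons, h, Ne.symm, add_comm]

variable [Fintype α]

theorem occ_eq_ite_prefix_add_sum_occ_cons (w x : List α) :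
    occ w x = (if x <+: w then 1 else 0) + ∑ a : α, occ w (a :: x) := by
  induction w generalizing x with
  | nil => simp [occ_nil]
  | cons c w ih =>
    have hfirst : (∑ a : α, if a :: x <+: c :: w then 1 else 0) = if x <+: w then 1 else 0 := by
      by_cases h : x <+: w <;> simp [List.cons_prefix_cons, h]
    simp only [occ_cons, ih x, Finset.sum_add_distrib, hfirst]

theorem occ_eq_ite_suffix_add_sum_occ_concat (w x : List α) :
    occ w x = (if x <:+ w then 1 else 0) + ∑ a : α, occ w (x ++ [a]) := by
  induction w generalizing x with
  | nil => simp [occ_nil]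
  | cons c w ih =>
    have hsuffix : (if x <:+ c :: w then 1 else 0) =
        (if x = c :: w then 1 else 0) + (if x <:+ w then 1 else 0) := by
      by_cases hx : x = c :: w
      · have hlong : ¬ c :: w <:+ w := fun h => by simpa using h.length_le
        simp [hx, hlong]
      · simp [List.suffix_cons_iff, hx]
    rw [occ_cons, ih x, hsuffix, ← List.sum_ite_concat_prefix x (c :: w)]
    simp only [occ_cons, Finset.sum_add_distrib]
    omega

end Occurrences

namespace KAbEq

variable {α : Type*} [DecidableEq α] {k : ℕ} {u v : List α}

theorem perm (h : KAbEq k u v) (hk : 1 ≤ k) : u.Perm v :=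
  List.perm_iff_count.mpr fun a => by
    rw [← occ_singleton, ← occ_singleton]
    exact h [a] (List.cons_ne_nil a []) hk

variable [Fintype α]

theorem prefix_iff (h : KAbEq k u v) {x : List α} (hx : x.length < k) : x <+: u ↔ x <+: v := by
  rcases eq_or_ne x [] with rfl | hne
  · simp
  have hext : ∑ a : α, occ u (a :: x) = ∑ a : α, occ v (a :: x) :=
    Finset.sum_congr rfl fun a _ => h (a :: x) (List.cons_ne_nil a x) hx
  have hocc := h x hne hx.le
  rw [occ_eq_ite_prefix_add_sum_occ_cons u, occ_eq_ite_prefix_add_sum_occ_cons v, hext] at hocc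
  by_cases hu : x <+: u <;> by_cases hv : x <+: v <;> simp_all

theorem suffix_iff (h : KAbEq k u v) {x : List α} (hx : x.length < k) : x <:+ u ↔ x <:+ v := by
  rcases eq_or_ne x [] with rfl | hne
  · simp
  have hext : ∑ a : α, occ u (x ++ [a]) = ∑ a : α, occ v (x ++ [a]) :=
    Finset.sum_congr rfl fun a _ => h (x ++ [a]) (by simp) (by simpa using hx)
  have hocc := h x hne hx.le
  rw [occ_eq_ite_suffix_add_sum_occ_concat u, occ_eq_ite_suffix_add_sum_occ_concat v, hext] at hocc
  by_cases hu : x <:+ u <;> by_cases hv : x <:+ v <;> simp_all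

end KAbEq

theorem stmt0 {A : Type*} [Fintype A] [DecidableEq A] (k : ℕ) (hk : 1 ≤ k)
    (u v : List A) (hlen : u.length = v.length) (hle : u.length ≤ 2 * k - 1)
    (h : KAbEq k u v) : u = v := by
  have hprefix : u.take (k - 1) = v.take (k - 1) :=
    List.take_eq_take_of_take_prefix hlen
      ((KAbEq.prefix_iff h (by simp; omega)).mp (List.take_prefix _ u))
  have hsuffix : u.drop (k - 1 + 1) = v.drop (k - 1 + 1) :=
    List.drop_eq_drop_of_drop_suffix hlen
      ((KAbEq.suffix_iff h (by simp; omega)).mp (List.drop_suffix _ u))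
  exact List.eq_of_perm_of_take_eq_of_drop_succ_eq (KAbEq.perm h hk) hprefix hsuffix
end

section
/- Let f : A^k → ℕ be a function and s₁, s₂ ∈ A^{k−1}. If there exists a word w of length n starting with s₁ and ending with s₂ such that f(t) = |w|_t for every t ∈ A^k, then for every s ∈ A^{k−1}, Σ_{a∈A} f(as) = Σ_{a∈A} f(sa) + c_s, where c_s = −1 if s = s₁ ≠ s₂, c_s = 1 if s = s₂ ≠ s₁, and c_s = 0 otherwise. -/
namespace List

variable {A : Type*}

theorem prefix_iff_eq_of_length_eq {s s' w : List A} (hs' : s' <+: w)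
    (hlen : s.length = s'.length) : s <+: w ↔ s = s' := by
  rw [prefix_iff_eq_take, hlen, ← prefix_iff_eq_take.mp hs']

theorem suffix_iff_eq_of_length_eq {s s' w : List A} (hs' : s' <:+ w)
    (hlen : s.length = s'.length) : s <:+ w ↔ s = s' := by
  rw [suffix_iff_eq_drop, hlen, ← suffix_iff_eq_drop.mp hs']

variable [DecidableEq A]

theorem occ_nil (x : List A) : occ [] x = if x <+: [] then 1 else 0 := by
  by_cases h : x <+: [] <;> simp [occ, h]

theorem occ_cons (b : A) (w x : List A) :
    occ (b :: w) x = (if x <+: b :: w then 1 else 0) + occ w x := by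
  have hrange : range (w.length + 1 + 1) = 0 :: (range (w.length + 1)).map Nat.succ :=
    range_succ_eq_map
  simp only [occ, length_cons, hrange, filter_cons, filter_map, Function.comp_def,
    drop_succ_cons, drop_zero]
  by_cases h : x <+: b :: w <;> simp [h, Nat.add_comm]

theorem suffix_cons_indicator (s w : List A) (b : A) :
    (if s <:+ b :: w then 1 else 0) =
      (if s = b :: w then 1 else 0) + (if s <:+ w then 1 else 0) := by
  by_cases h : s = b :: w
  · have : ¬ b :: w <:+ w := fun hw => by simpa using hw.length_le
    simp [h, this]
  · simp [suffix_cons_iff, h]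

variable [Fintype A]

theorem sum_cons_prefix_cons (s w : List A) (b : A) :
    (∑ a : A, if a :: s <+: b :: w then 1 else 0) = if s <+: w then 1 else 0 := by
  simp only [cons_prefix_cons, ite_and]
  rw [Finset.sum_ite_eq' Finset.univ b, if_pos (Finset.mem_univ b)]

theorem sum_snoc_prefix_add (s v : List A) :
    (∑ a : A, if s ++ [a] <+: v then 1 else 0) + (if s = v then 1 else 0) =
      if s <+: v then 1 else 0 := by
  by_cases hsv : s <+: v
  · obtain ⟨u, rfl⟩ := hsv
    simp only [prefix_append_right_inj, prefix_append, if_true]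
    cases u with
    | nil => simp
    | cons b u => simp [Finset.sum_ite_eq']
  · have hsnoc (a : A) : ¬ s ++ [a] <+: v := fun h => hsv ((prefix_append s [a]).trans h)
    have hne : s ≠ v := fun h => hsv (h ▸ prefix_refl s)
    simp [hsnoc, hne, hsv]

theorem sum_occ_cons_add (w s : List A) :
    (∑ a : A, occ w (a :: s)) + (if s <+: w then 1 else 0) = occ w s := by
  induction w with
  | nil => simp [occ_nil]
  | cons b w ih =>
    simp only [occ_cons, Finset.sum_add_distrib, sum_cons_prefix_cons]
    omega

theorem sum_occ_snoc_add (w s : List A) :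
    (∑ a : A, occ w (s ++ [a])) + (if s <:+ w then 1 else 0) = occ w s := by
  induction w with
  | nil => simp [occ_nil]
  | cons b w ih =>
    have hlast := sum_snoc_prefix_add s (b :: w)
    simp only [occ_cons, Finset.sum_add_distrib, suffix_cons_indicator]
    omega

end List

theorem ite_and_not_sub_ite (p q : Prop) [Decidable p] [Decidable q] :
    (if p ∧ ¬q then -1 else if q ∧ ¬p then 1 else 0 : ℤ) =
      (if q then 1 else 0) - (if p then 1 else 0) := by
  by_cases hp : p <;> by_cases hq : q <;> simp [hp, hq]

theorem stmt10 {A : Type*} [Fintype A] [DecidableEq A] (k : ℕ) (hk : 1 ≤ k)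
    (s₁ s₂ : List A) (hs₁ : s₁.length = k - 1) (hs₂ : s₂.length = k - 1)
    (f : List A → ℕ) (w : List A)
    (hpref : s₁ <+: w) (hsuff : s₂ <:+ w)
    (hf : ∀ t : List A, t.length = k → f t = occ w t) :
    ∀ s : List A, s.length = k - 1 →
      (∑ a : A, (f (a :: s) : ℤ)) =
        (∑ a : A, (f (s ++ [a]) : ℤ)) +
          (if s = s₁ ∧ s ≠ s₂ then -1 else if s = s₂ ∧ s ≠ s₁ then 1 else 0) := by
  intro s hs
  have hpre := List.prefix_iff_eq_of_length_eq hpref (hs.trans hs₁.symm)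
  have hsuf := List.suffix_iff_eq_of_length_eq hsuff (hs.trans hs₂.symm)
  have hleft : ∑ a : A, f (a :: s) = ∑ a : A, occ w (a :: s) :=
    Finset.sum_congr rfl fun a _ => hf _ (by simp; omega)
  have hright : ∑ a : A, f (s ++ [a]) = ∑ a : A, occ w (s ++ [a]) :=
    Finset.sum_congr rfl fun a _ => hf _ (by simp; omega)
  have e₁ := List.sum_occ_cons_add w s
  have e₂ := List.sum_occ_snoc_add w s
  simp only [hpre, ← hleft] at e₁
  simp only [hsuf, ← hright] at e₂
  rw [ite_and_not_sub_ite]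
  have := congrArg (Nat.cast : ℕ → ℤ) (e₁.trans e₂.symm)
  push_cast at this
  linarith
end

section
/- Let ω be an aperiodic infinite word over a finite alphabet such that for every n ≥ 1 and for a fixed positive integer k, P^{(k)}_ω(n) = q^{(k)}(n), where q^{(k)}(n) = n+1 for n ≤ 2k−1 and 2k for n ≥ 2k. Then ω is a Sturmian word (an aperiodic balanced binary word). -/
/-- `u` is a factor of the infinite word `ω`. -/
def IsFactorOf {A : Type*} (u : List A) (ω : ℕ → A) : Prop :=
  ∃ i : ℕ, u = (List.range u.length).map fun j => ω (i + j)

/-- `ω` is ultimately periodic. -/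
def UltimatelyPeriodic {A : Type*} (ω : ℕ → A) : Prop :=
  ∃ p : ℕ, 1 ≤ p ∧ ∃ N : ℕ, ∀ i ≥ N, ω (i + p) = ω i

/-- The setoid of `k`-Abelian equivalence on the factors of `ω` of length `n`. -/
def factorSetoid {A : Type*} [DecidableEq A] (ω : ℕ → A) (k n : ℕ) :
    Setoid {u : List A // u.length = n ∧ IsFactorOf u ω} where
  r u v := KAbEq k u.1 v.1
  iseqv := ⟨fun _ _ _ _ => rfl, fun h x hx hxk => (h x hx hxk).symm,
    fun h₁ h₂ x hx hxk => (h₁ x hx hxk).trans (h₂ x hx hxk)⟩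

/-- The `k`-Abelian complexity of `ω`: the number of `k`-Abelian classes of
factors of `ω` of length `n`. -/
noncomputable def kabComplexity {A : Type*} [DecidableEq A] (ω : ℕ → A) (k n : ℕ) : ℕ :=
  Nat.card (Quotient (factorSetoid ω k n))

section Factors

variable {A : Type*}

def factorAt (ω : ℕ → A) (i n : ℕ) : List A := (List.range n).map fun j => ω (i + j)

@[simp]
lemma length_factorAt (ω : ℕ → A) (i n : ℕ) : (factorAt ω i n).length = n := by
  simp [factorAt]

lemma factorAt_eq_factorAt_iff {ω : ℕ → A} {i i' n : ℕ} :
    factorAt ω i n = factorAt ω i' n ↔ ∀ s < n, ω (i + s) = ω (i' + s) := by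
  simp [factorAt]

lemma factorAt_succ (ω : ℕ → A) (i n : ℕ) :
    factorAt ω i (n + 1) = factorAt ω i n ++ [ω (i + n)] := by
  simp [factorAt, List.range_succ]

lemma factorAt_succ' (ω : ℕ → A) (i n : ℕ) :
    factorAt ω i (n + 1) = ω i :: factorAt ω (i + 1) n := by
  simp [factorAt, List.range_succ_eq_map, Nat.add_assoc, Nat.add_comm 1]

lemma factorAt_one (ω : ℕ → A) (i : ℕ) : factorAt ω i 1 = [ω i] := by
  simp [factorAt]

lemma take_factorAt (ω : ℕ → A) (i n p : ℕ) :
    (factorAt ω i n).take p = factorAt ω i (min p n) := by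
  simp [factorAt, ← List.map_take, List.take_range]

lemma drop_factorAt (ω : ℕ → A) (i n p : ℕ) :
    (factorAt ω i n).drop p = factorAt ω (i + p) (n - p) :=
  List.ext_getElem (by simp) fun s _ _ => by simp [factorAt, Nat.add_assoc]

lemma prefix_factorAt_iff {ω : ℕ → A} {i n : ℕ} {z : List A} :
    z <+: factorAt ω i n ↔ z.length ≤ n ∧ factorAt ω i z.length = z := by
  rw [List.prefix_iff_eq_take, take_factorAt]
  constructor
  · intro h
    have hlen : z.length ≤ n := by
      have := congrArg List.length h
      simp only [length_factorAt] at this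
      omega
    rw [min_eq_left hlen] at h
    exact ⟨hlen, h.symm⟩
  · rintro ⟨hlen, h⟩
    rw [min_eq_left hlen, h]

end Factors

section Occurrences

variable {A : Type*} [DecidableEq A]

lemma occ_factorAt (ω : ℕ → A) (i m : ℕ) (z : List A) :
    occ (factorAt ω i m) z =
      ∑ p ∈ Finset.range (m + 1 - z.length), if factorAt ω (i + p) z.length = z then 1 else 0 := by
  have hfilter : (Finset.range (m + 1)).filter (fun p => z <+: (factorAt ω i m).drop p) =
      (Finset.range (m + 1 - z.length)).filter (fun p => factorAt ω (i + p) z.length = z) := by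
    ext p
    simp only [Finset.mem_filter, Finset.mem_range, drop_factorAt, prefix_factorAt_iff]
    constructor
    · rintro ⟨hp, hlen, h⟩
      exact ⟨by omega, h⟩
    · rintro ⟨hp, h⟩
      exact ⟨by omega, by omega, h⟩
  rw [← Finset.card_filter, ← hfilter]
  unfold occ
  rw [length_factorAt]
  rfl

lemma occ_factorAt_succ_left (ω : ℕ → A) (i m : ℕ) {z : List A} (hz : z.length ≤ m + 1) :
    occ (factorAt ω i (m + 1)) z =
      (if factorAt ω i z.length = z then 1 else 0) + occ (factorAt ω (i + 1) m) z := by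
  rw [occ_factorAt, occ_factorAt, show m + 1 + 1 - z.length = m + 1 - z.length + 1 by omega,
    Finset.sum_range_succ', add_comm]
  simp only [Nat.add_zero, Nat.add_right_comm i 1]
  rfl

lemma occ_factorAt_succ_right (ω : ℕ → A) (i m : ℕ) {z : List A} (hz : z.length ≤ m + 1) :
    occ (factorAt ω i (m + 1)) z =
      occ (factorAt ω i m) z +
        (if factorAt ω (i + (m + 1 - z.length)) z.length = z then 1 else 0) := by
  rw [occ_factorAt, occ_factorAt, show m + 1 + 1 - z.length = m + 1 - z.length + 1 by omega,
    Finset.sum_range_succ]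

lemma occ_factorAt_self (ω : ℕ → A) (i i' m : ℕ) :
    occ (factorAt ω i' m) (factorAt ω i m) = if factorAt ω i' m = factorAt ω i m then 1 else 0 := by
  simp only [occ_factorAt, length_factorAt, Nat.add_sub_cancel_left, Finset.sum_range_one,
    Nat.add_zero]

variable [Fintype A]

lemma sum_occ_factorAt_cons (ω : ℕ → A) (i m : ℕ) (z : List A) :
    ∑ c, occ (factorAt ω i (m + 1)) (c :: z) = occ (factorAt ω (i + 1) m) z := by
  simp only [occ_factorAt]
  simp only [List.length_cons, Nat.add_sub_add_right, factorAt_succ', List.cons.injEq]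
  rw [Finset.sum_comm]
  simp [ite_and, Nat.add_right_comm i _ 1]

lemma sum_occ_factorAt_concat (ω : ℕ → A) (i m : ℕ) (z : List A) :
    ∑ c, occ (factorAt ω i (m + 1)) (z ++ [c]) = occ (factorAt ω i m) z := by
  simp only [occ_factorAt]
  simp only [List.length_append, List.length_singleton, Nat.add_sub_add_right, factorAt_succ,
    List.append_singleton_inj]
  rw [Finset.sum_comm]
  simp [ite_and]

end Occurrences

section Profiles

variable {A : Type*} [DecidableEq A]

def kProfile (k : ℕ) (u : List A) : List A → ℕ :=
  fun x => if x ≠ [] ∧ x.length ≤ k then occ u x else 0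

lemma occ_eq_of_kProfile_eq {k : ℕ} {u v x : List A} (h : kProfile k u = kProfile k v)
    (hx : x ≠ []) (hxk : x.length ≤ k) : occ u x = occ v x := by
  simpa [kProfile, hx, hxk] using congrFun h x

lemma kAbEq_iff_kProfile_eq {k : ℕ} {u v : List A} : KAbEq k u v ↔ kProfile k u = kProfile k v := by
  refine ⟨fun h => funext fun x => ?_, fun h x hx hxk => occ_eq_of_kProfile_eq h hx hxk⟩
  unfold kProfile
  split_ifs with hx
  exacts [h x hx.1 hx.2, rfl]

lemma factorAt_eq_of_kProfile_eq {ω : ℕ → A} {k m i i' : ℕ} (hm : 1 ≤ m) (hmk : m ≤ k)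
    (h : kProfile k (factorAt ω i m) = kProfile k (factorAt ω i' m)) :
    factorAt ω i m = factorAt ω i' m := by
  have hne : factorAt ω i m ≠ [] := by
    rw [ne_eq, ← List.length_eq_zero_iff, length_factorAt]
    omega
  have := occ_eq_of_kProfile_eq h hne (by simpa)
  rw [occ_factorAt_self, occ_factorAt_self, if_pos rfl] at this
  split_ifs at this with h'
  exact h'.symm

lemma count_factorAt (ω : ℕ → A) (a : A) (i L : ℕ) :
    (factorAt ω i L).count a = ∑ p ∈ Finset.range L, if ω (i + p) = a then 1 else 0 := by
  induction L with
  | zero => simp [factorAt]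
  | succ L ih =>
    rw [factorAt_succ, List.count_append, ih, Finset.sum_range_succ, List.count_singleton]
    simp only [beq_iff_eq]

/-- Each position of the prefix of length `n + 1 - k` starts exactly one factor of length `k`. -/
lemma count_factorAt_eq_of_kProfile_eq [Fintype A] {ω : ℕ → A} {k n i i' : ℕ} (a : A)
    (hk : 1 ≤ k) (h : kProfile k (factorAt ω i n) = kProfile k (factorAt ω i' n)) :
    (factorAt ω i (n + 1 - k)).count a = (factorAt ω i' (n + 1 - k)).count a := by
  obtain ⟨k, rfl⟩ : ∃ k', k = k' + 1 := ⟨k - 1, by omega⟩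
  let S : Finset (List A) := (List.finite_length_eq A (k + 1)).toFinset.filter (·.head? = some a)
  have key : ∀ j, (factorAt ω j (n + 1 - (k + 1))).count a = ∑ z ∈ S, occ (factorAt ω j n) z := by
    intro j
    have hS : ∀ z ∈ S, occ (factorAt ω j n) z =
        ∑ p ∈ Finset.range (n + 1 - (k + 1)), if factorAt ω (j + p) (k + 1) = z then 1 else 0 := by
      intro z hz
      simp only [S, Finset.mem_filter, Set.Finite.mem_toFinset, Set.mem_ofPred_eq] at hz
      rw [occ_factorAt, hz.1]
    rw [Finset.sum_congr rfl hS, Finset.sum_comm, count_factorAt]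
    refine Finset.sum_congr rfl fun p _ => ?_
    rw [Finset.sum_ite_eq]
    simp [S, factorAt_succ']
  rw [key i, key i']
  refine Finset.sum_congr rfl fun z hz => occ_eq_of_kProfile_eq h ?_ ?_ <;>
    simp only [S, Finset.mem_filter, Set.Finite.mem_toFinset, Set.mem_ofPred_eq] at hz
  · rintro rfl
    simp at hz
  · omega

end Profiles

section Extension

variable {A : Type*} [DecidableEq A] [Fintype A] {ω : ℕ → A} {j m n i i' : ℕ}

lemma prefix_iff_of_kProfile_eq
    (h : kProfile (j + 1) (factorAt ω i (m + 1)) = kProfile (j + 1) (factorAt ω i' (m + 1)))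
    {z : List A} (hz : z ≠ []) (hzj : z.length ≤ j) (hzm : z.length ≤ m + 1) :
    factorAt ω i z.length = z ↔ factorAt ω i' z.length = z := by
  -- `occ w z - ∑ c, occ w (c :: z)` only counts an occurrence of `z` at position `0`
  have hocc := occ_eq_of_kProfile_eq h hz (by omega)
  have hsum : ∑ c, occ (factorAt ω i (m + 1)) (c :: z) =
      ∑ c, occ (factorAt ω i' (m + 1)) (c :: z) :=
    Finset.sum_congr rfl fun c _ => occ_eq_of_kProfile_eq h (List.cons_ne_nil _ _) (by simpa)
  rw [occ_factorAt_succ_left _ _ _ hzm, occ_factorAt_succ_left _ _ _ hzm,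
    ← sum_occ_factorAt_cons ω i m z, ← sum_occ_factorAt_cons ω i' m z, hsum] at hocc
  split_ifs at hocc <;> first | omega | tauto

lemma suffix_iff_of_kProfile_eq
    (h : kProfile (j + 1) (factorAt ω i (m + 1)) = kProfile (j + 1) (factorAt ω i' (m + 1)))
    {z : List A} (hz : z ≠ []) (hzj : z.length ≤ j) (hzm : z.length ≤ m + 1) :
    factorAt ω (i + (m + 1 - z.length)) z.length = z ↔
      factorAt ω (i' + (m + 1 - z.length)) z.length = z := by
  have hocc := occ_eq_of_kProfile_eq h hz (by omega)
  have hsum : ∑ c, occ (factorAt ω i (m + 1)) (z ++ [c]) =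
      ∑ c, occ (factorAt ω i' (m + 1)) (z ++ [c]) :=
    Finset.sum_congr rfl fun c _ => occ_eq_of_kProfile_eq h (by simp) (by simpa)
  rw [occ_factorAt_succ_right _ _ _ hzm, occ_factorAt_succ_right _ _ _ hzm,
    ← sum_occ_factorAt_concat ω i m z, ← sum_occ_factorAt_concat ω i' m z, hsum] at hocc
  split_ifs at hocc <;> first | omega | tauto

lemma kProfile_extension
    (h : kProfile (j + 2) (factorAt ω i (n + 2)) = kProfile (j + 2) (factorAt ω i' (n + 2))) :
    ω i = ω i' ∧ ω (i + n + 1) = ω (i' + n + 1) ∧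
      kProfile (j + 1) (factorAt ω (i + 1) n) = kProfile (j + 1) (factorAt ω (i' + 1) n) := by
  have hpre {z : List A} := prefix_iff_of_kProfile_eq (z := z) h
  have hsuf {z : List A} := suffix_iff_of_kProfile_eq (z := z) h
  refine ⟨?_, ?_, funext fun x => ?_⟩
  · have := (hpre (z := [ω i]) (by simp) (by simp) (by simp)).1
    simpa [factorAt_one, eq_comm] using this
  · have := (hsuf (z := [ω (i + n + 1)]) (by simp) (by simp) (by simp)).1
    simpa [factorAt_one, Nat.add_assoc, eq_comm] using this
  unfold kProfile
  split_ifs with hx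
  swap
  · rfl
  rcases le_or_gt x.length n with hxn | hxn
  · have hocc := occ_eq_of_kProfile_eq h hx.1 (by omega)
    have split (i : ℕ) : occ (factorAt ω i (n + 2)) x =
        (if factorAt ω i x.length = x then 1 else 0) + occ (factorAt ω (i + 1) n) x +
          (if factorAt ω (i + (n + 1 + 1 - x.length)) x.length = x then 1 else 0) := by
      rw [occ_factorAt_succ_left _ _ _ (by omega), occ_factorAt_succ_right _ _ _ (by omega),
        show i + 1 + (n + 1 - x.length) = i + (n + 1 + 1 - x.length) by omega]
      omega
    rw [split, split] at hocc
    simp only [hpre hx.1 (by omega) (by omega), hsuf hx.1 (by omega) (by omega)] at hocc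
    omega
  · simp [occ_factorAt, show n + 1 - x.length = 0 by omega]

end Extension

section Determination

variable {ι β γ : Type*} {I : Set ι} {F : ι → β} {G : ι → γ}

lemma Set.exists_image_eq_image_image_of_determines [Nonempty ι]
    (h : ∀ i ∈ I, ∀ i' ∈ I, F i = F i' → G i = G i') :
    ∃ φ : β → γ, G '' I = φ '' (F '' I) ∧ ∀ i ∈ I, φ (F i) = G i := by
  have hφ : ∀ i ∈ I, G (Function.invFunOn F I (F i)) = G i := fun i hi =>
    h _ (Function.invFunOn_mem ⟨i, hi, rfl⟩) _ hi (Function.invFunOn_eq ⟨i, hi, rfl⟩)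
  refine ⟨fun b => G (Function.invFunOn F I b), ?_, hφ⟩
  rw [Set.image_image]
  exact (Set.image_congr hφ).symm

lemma Set.Finite.image_of_determines [Nonempty ι] (hF : (F '' I).Finite)
    (h : ∀ i ∈ I, ∀ i' ∈ I, F i = F i' → G i = G i') : (G '' I).Finite := by
  obtain ⟨φ, hG, -⟩ := Set.exists_image_eq_image_image_of_determines h
  exact hG ▸ hF.image φ

lemma Set.ncard_image_le_of_determines [Nonempty ι] (hF : (F '' I).Finite)
    (h : ∀ i ∈ I, ∀ i' ∈ I, F i = F i' → G i = G i') : (G '' I).ncard ≤ (F '' I).ncard := by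
  obtain ⟨φ, hG, -⟩ := Set.exists_image_eq_image_image_of_determines h
  exact hG ▸ Set.ncard_image_le hF

lemma Set.ncard_image_lt_of_determines [Nonempty ι] (hF : (F '' I).Finite)
    (h : ∀ i ∈ I, ∀ i' ∈ I, F i = F i' → G i = G i')
    (hsep : ∃ i ∈ I, ∃ i' ∈ I, G i = G i' ∧ F i ≠ F i') : (G '' I).ncard < (F '' I).ncard := by
  obtain ⟨φ, hG, hφ⟩ := Set.exists_image_eq_image_image_of_determines h
  obtain ⟨i, hi, i', hi', hGi, hFi⟩ := hsep
  rw [hG]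
  refine (Set.ncard_image_le hF).lt_of_ne fun heq => hFi ?_
  exact (Set.ncard_image_iff hF).1 heq ⟨i, hi, rfl⟩ ⟨i', hi', rfl⟩ (by rw [hφ i hi, hφ i' hi', hGi])

end Determination

section Periodicity

variable {A : Type*} [Finite A] {ω : ℕ → A}

def tailFactors (ω : ℕ → A) (n t : ℕ) : Set (List A) := (factorAt ω · n) '' Set.Ici t

lemma tailFactors_finite (ω : ℕ → A) (n t : ℕ) : (tailFactors ω n t).Finite :=
  (List.finite_length_eq A n).subset (by rintro _ ⟨i, -, rfl⟩; simp)

lemma ultimatelyPeriodic_of_factorAt_determines_next (N t : ℕ)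
    (h : ∀ i ≥ t, ∀ i' ≥ t, factorAt ω i N = factorAt ω i' N → ω (i + N) = ω (i' + N)) :
    UltimatelyPeriodic ω := by
  obtain ⟨i₁, hi₁, i₂, hi₂, hlt, heq⟩ := (Set.Ici_infinite t).exists_lt_map_eq_of_mapsTo
    (Set.mapsTo_image _ _) (tailFactors_finite ω N t)
  simp only [Set.mem_Ici] at hi₁ hi₂
  have hshift : ∀ s, ω (i₁ + s) = ω (i₂ + s) := by
    intro s
    induction s using Nat.strong_induction_on with
    | _ s ih =>
      rcases lt_or_ge s N with hs | hs
      · exact factorAt_eq_factorAt_iff.1 heq s hs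
      · have hwin : factorAt ω (i₁ + (s - N)) N = factorAt ω (i₂ + (s - N)) N :=
          factorAt_eq_factorAt_iff.2 fun q hq => by
            simpa [Nat.add_assoc] using ih (s - N + q) (by omega)
        simpa [Nat.add_assoc, Nat.sub_add_cancel hs] using h _ (by omega) _ (by omega) hwin
  refine ⟨i₂ - i₁, by omega, i₁, fun i hi => ?_⟩
  simpa [show i₁ + (i - i₁) = i by omega, show i₂ + (i - i₁) = i + (i₂ - i₁) by omega]
    using (hshift (i - i₁)).symm

lemma exists_right_special (hap : ¬ UltimatelyPeriodic ω) (N t : ℕ) :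
    ∃ i ≥ t, ∃ i' ≥ t, factorAt ω i N = factorAt ω i' N ∧ ω (i + N) ≠ ω (i' + N) := by
  by_contra h
  push Not at h
  exact hap (ultimatelyPeriodic_of_factorAt_determines_next N t h)

lemma ncard_tailFactors_lt_succ (hap : ¬ UltimatelyPeriodic ω) (N t : ℕ) :
    (tailFactors ω N t).ncard < (tailFactors ω (N + 1) t).ncard := by
  obtain ⟨i, hi, i', hi', heq, hne⟩ := exists_right_special hap N t
  refine Set.ncard_image_lt_of_determines (tailFactors_finite ω (N + 1) t)
    (fun i _ i' _ h => ?_) ⟨i, hi, i', hi', heq, ?_⟩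
  · simpa [take_factorAt] using congrArg (·.take N) h
  · simp [factorAt_succ, hne]

lemma le_ncard_tailFactors (hap : ¬ UltimatelyPeriodic ω) (t n : ℕ) :
    n + 1 ≤ (tailFactors ω n t).ncard := by
  induction n with
  | zero =>
    have : tailFactors ω 0 t = {[]} := by simp [tailFactors, factorAt]
    simp [this]
  | succ n ih => exact ih.trans_lt (ncard_tailFactors_lt_succ hap n t)

lemma exists_left_special (hap : ¬ UltimatelyPeriodic ω) (N t : ℕ) :
    ∃ i ≥ t, ∃ i' ≥ t, factorAt ω (i + 1) N = factorAt ω (i' + 1) N ∧ ω i ≠ ω i' := by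
  by_contra h
  push Not at h
  have hsub : (fun i => factorAt ω (i + 1) N) '' Set.Ici t ⊆ tailFactors ω N t := by
    rintro _ ⟨i, hi, rfl⟩
    exact ⟨i + 1, by simp only [Set.mem_Ici] at hi ⊢; omega, rfl⟩
  have hle :
      (tailFactors ω (N + 1) t).ncard ≤ ((fun i => factorAt ω (i + 1) N) '' Set.Ici t).ncard :=
    Set.ncard_image_le_of_determines ((tailFactors_finite ω N t).subset hsub)
      fun i hi i' hi' he => by rw [factorAt_succ', factorAt_succ', h i hi i' hi' he, he]
  have := (Set.ncard_le_ncard hsub (tailFactors_finite ω N t)).trans_lt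
    (ncard_tailFactors_lt_succ hap N t)
  omega

end Periodicity

section Classes

variable {A : Type*} [DecidableEq A] {ω : ℕ → A}

def tailClasses (ω : ℕ → A) (k n t : ℕ) : Set (List A → ℕ) :=
  (fun i => kProfile k (factorAt ω i n)) '' Set.Ici t

lemma tailClasses_finite [Finite A] (ω : ℕ → A) (k n t : ℕ) : (tailClasses ω k n t).Finite := by
  have : tailClasses ω k n t = kProfile k '' tailFactors ω n t := by
    simp only [tailClasses, tailFactors, Set.image_image]
  exact this ▸ (tailFactors_finite ω n t).image _

lemma kabComplexity_eq_ncard_tailClasses (ω : ℕ → A) (k n : ℕ) :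
    kabComplexity ω k n = (tailClasses ω k n 0).ncard := by
  let f : Quotient (factorSetoid ω k n) → (List A → ℕ) :=
    Quotient.lift (fun u => kProfile k u.1) fun u v (h : KAbEq k u.1 v.1) =>
      kAbEq_iff_kProfile_eq.1 h
  have hinj : Function.Injective f := by
    rintro ⟨u⟩ ⟨v⟩ h
    exact Quotient.sound (kAbEq_iff_kProfile_eq.2 h)
  have hrange : Set.range f = tailClasses ω k n 0 := by
    ext y
    constructor
    · rintro ⟨⟨u, rfl, i, hu⟩, rfl⟩
      exact ⟨i, Set.mem_Ici.2 (Nat.zero_le i), congrArg (kProfile k) hu.symm⟩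
    · rintro ⟨i, -, rfl⟩
      exact ⟨⟦⟨factorAt ω i n, length_factorAt .., i, by rw [length_factorAt]; rfl⟩⟧, rfl⟩
  rw [kabComplexity, ← hrange, ← Nat.card_coe_set_eq]
  exact Nat.card_congr (Equiv.ofInjective f hinj)

variable [Fintype A]

lemma ncard_tailClasses_add_two_le (hap : ¬ UltimatelyPeriodic ω) (j n t : ℕ) :
    (tailClasses ω (j + 1) n (t + 1)).ncard + 2 ≤ (tailClasses ω (j + 2) (n + 2) t).ncard := by
  let P : ℕ → List A → ℕ := fun i => kProfile (j + 1) (factorAt ω (i + 1) n)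
  let F₂ : ℕ → A × (List A → ℕ) := fun i => (ω i, P i)
  let F₃ : ℕ → (A × (List A → ℕ)) × A := fun i => (F₂ i, ω (i + n + 1))
  have hP : P '' Set.Ici t = tailClasses ω (j + 1) n (t + 1) := by
    rw [tailClasses, ← Set.image_add_const_Ici, Set.image_image]
  have h₃ : ∀ i ∈ Set.Ici t, ∀ i' ∈ Set.Ici t, kProfile (j + 2) (factorAt ω i (n + 2)) =
      kProfile (j + 2) (factorAt ω i' (n + 2)) → F₃ i = F₃ i' := by
    intro i _ i' _ h
    obtain ⟨h₁, h₂, h₃⟩ := kProfile_extension h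
    simp only [F₃, F₂, P, h₁, h₂, h₃]
  have hfin₃ : (F₃ '' Set.Ici t).Finite :=
    (tailClasses_finite ω (j + 2) (n + 2) t).image_of_determines h₃
  have hle : (F₃ '' Set.Ici t).ncard ≤ (tailClasses ω (j + 2) (n + 2) t).ncard :=
    Set.ncard_image_le_of_determines (tailClasses_finite ω (j + 2) (n + 2) t) h₃
  have h₂ : ∀ i ∈ Set.Ici t, ∀ i' ∈ Set.Ici t, F₃ i = F₃ i' → F₂ i = F₂ i' :=
    fun _ _ _ _ h => congrArg Prod.fst h
  -- a right special factor separates `F₃` from `F₂`, a left special factor `F₂` from `P`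
  have hlt₃ : (F₂ '' Set.Ici t).ncard < (F₃ '' Set.Ici t).ncard := by
    obtain ⟨i, hi, i', hi', heq, hne⟩ := exists_right_special hap (n + 1) t
    rw [factorAt_succ', factorAt_succ', List.cons.injEq] at heq
    refine Set.ncard_image_lt_of_determines hfin₃ h₂ ⟨i, hi, i', hi', ?_, fun h => hne ?_⟩
    · simp only [F₂, P, heq]
    · simpa [F₃, Nat.add_assoc] using congrArg Prod.snd h
  have hlt₂ : (P '' Set.Ici t).ncard < (F₂ '' Set.Ici t).ncard := by
    obtain ⟨i, hi, i', hi', heq, hne⟩ := exists_left_special hap n t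
    exact Set.ncard_image_lt_of_determines (hfin₃.image_of_determines h₂)
      (fun _ _ _ _ h => congrArg Prod.snd h)
      ⟨i, hi, i', hi', by simp only [P, heq], fun h => hne (congrArg Prod.fst h)⟩
  rw [← hP]
  omega

lemma ncard_tailClasses_one_add_le (hap : ¬ UltimatelyPeriodic ω) (m t j : ℕ) :
    (tailClasses ω 1 m (t + j)).ncard + 2 * j ≤ (tailClasses ω (j + 1) (m + 2 * j) t).ncard := by
  induction j generalizing t with
  | zero => simp
  | succ j ih =>
    have hstep := ncard_tailClasses_add_two_le hap j (m + 2 * j) t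
    rw [show m + 2 * (j + 1) = m + 2 * j + 2 by ring, show t + (j + 1) = t + 1 + j by ring,
      show j + 1 + 1 = j + 2 by rfl]
    have := ih (t + 1)
    omega

end Classes

lemma Nat.le_add_one_of_ncard_image_Ici_le_two {f : ℕ → ℕ} {t : ℕ}
    (hstep : ∀ l, f (l + 1) ≤ f l + 1 ∧ f l ≤ f (l + 1) + 1)
    (hfin : (f '' Set.Ici t).Finite) (hcard : (f '' Set.Ici t).ncard ≤ 2)
    {i i' : ℕ} (hi : t ≤ i) (hi' : t ≤ i') : f i ≤ f i' + 1 := by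
  by_contra hlt
  have hval : ∀ l ≥ t, f l = f i ∨ f l = f i' := by
    intro l hl
    by_contra hl'
    push Not at hl'
    have := (Set.two_lt_ncard_iff hfin).2 ⟨f l, f i, f i', ⟨l, hl, rfl⟩, ⟨i, hi, rfl⟩,
      ⟨i', hi', rfl⟩, hl'.1, hl'.2, by omega⟩
    omega
  -- two consecutive values differ by at most one, but the only two values differ by two or more
  have hconst : ∀ l ≥ t, f l = f t := by
    intro l hl
    induction l, hl using Nat.le_induction with
    | base => rfl
    | succ l hl ih =>
      have := hstep l
      rcases hval l hl with h | h <;> rcases hval (l + 1) (by omega) with h' | h' <;> omega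
  have := hconst i hi
  have := hconst i' hi'
  omega

section Balance

variable {A : Type*} [DecidableEq A] {ω : ℕ → A}

lemma count_factorAt_succ_le (ω : ℕ → A) (a : A) (i L : ℕ) :
    (factorAt ω (i + 1) L).count a ≤ (factorAt ω i L).count a + 1 ∧
      (factorAt ω i L).count a ≤ (factorAt ω (i + 1) L).count a + 1 := by
  have h := congrArg (List.count a) (factorAt_succ' ω i L)
  rw [factorAt_succ, List.count_append, List.count_singleton, List.count_cons] at h
  split_ifs at h <;> omega

lemma exists_count_factorAt_ne {a b : A} (hap : ¬ UltimatelyPeriodic ω) (hab : a ≠ b)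
    (hω : ∀ i, ω i = a ∨ ω i = b) {m : ℕ} (hm : 1 ≤ m) (t : ℕ) :
    ∃ i ≥ t, (factorAt ω i m).count a ≠ (factorAt ω (i + 1) m).count a := by
  by_contra h
  push Not at h
  refine hap ⟨m, hm, t, fun i hi => ?_⟩
  have h₁ := congrArg (List.count a) (factorAt_succ' ω i m)
  rw [factorAt_succ, List.count_append, List.count_singleton, List.count_cons, h i hi] at h₁
  rcases hω i with h' | h' <;> rcases hω (i + m) with h'' | h'' <;> rw [h', h''] at h₁ ⊢ <;>
    simp [hab.symm] at h₁ ⊢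

lemma exists_ge_kProfile_eq_of_ncard_le [Finite A] {k n t : ℕ}
    (h : (tailClasses ω k n 0).ncard ≤ (tailClasses ω k n t).ncard) (i : ℕ) :
    ∃ p ≥ t, kProfile k (factorAt ω p n) = kProfile k (factorAt ω i n) := by
  have hsub : tailClasses ω k n t ⊆ tailClasses ω k n 0 :=
    Set.image_mono (Set.Ici_subset_Ici.2 (Nat.zero_le t))
  have hmem : kProfile k (factorAt ω i n) ∈ tailClasses ω k n t := by
    rw [Set.eq_of_subset_of_ncard_le hsub h (tailClasses_finite ω k n 0)]
    exact ⟨i, Nat.zero_le i, rfl⟩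
  obtain ⟨p, hp, he⟩ := hmem
  exact ⟨p, hp, he⟩

lemma exists_ge_factorAt_eq [Finite A] (hap : ¬ UltimatelyPeriodic ω) {k L : ℕ} (hL : 1 ≤ L)
    (hLk : L ≤ k) (hC : (tailClasses ω k L 0).ncard ≤ L + 1) (t i : ℕ) :
    ∃ p ≥ t, factorAt ω p L = factorAt ω i L := by
  have hdet : ∀ p ∈ Set.Ici t, ∀ p' ∈ Set.Ici t, kProfile k (factorAt ω p L) =
      kProfile k (factorAt ω p' L) → factorAt ω p L = factorAt ω p' L :=
    fun _ _ _ _ h => factorAt_eq_of_kProfile_eq hL hLk h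
  have hfac := (le_ncard_tailFactors hap t L).trans
    (Set.ncard_image_le_of_determines (tailClasses_finite ω k L t) hdet)
  obtain ⟨p, hp, he⟩ := exists_ge_kProfile_eq_of_ncard_le (hC.trans hfac) i
  exact ⟨p, hp, factorAt_eq_of_kProfile_eq hL hLk he⟩

variable [Fintype A]

lemma two_le_ncard_tailClasses_one {a b : A} (hap : ¬ UltimatelyPeriodic ω) (hab : a ≠ b)
    (hω : ∀ i, ω i = a ∨ ω i = b) {m : ℕ} (hm : 1 ≤ m) (t : ℕ) :
    2 ≤ (tailClasses ω 1 m t).ncard := by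
  obtain ⟨i, hi, hne⟩ := exists_count_factorAt_ne hap hab hω hm t
  refine (Set.one_lt_ncard_iff (tailClasses_finite ω 1 m t)).2
    ⟨_, _, ⟨i, hi, rfl⟩, ⟨i + 1, Set.mem_Ici.2 (Nat.le_succ_of_le hi), rfl⟩,
      fun h => hne ?_⟩
  simpa using count_factorAt_eq_of_kProfile_eq a le_rfl h

lemma count_factorAt_le_add_one_of_ncard_le (a : A) {L t : ℕ}
    (h : (tailClasses ω 1 L t).ncard ≤ 2) {i i' : ℕ} (hi : t ≤ i) (hi' : t ≤ i') :
    (factorAt ω i L).count a ≤ (factorAt ω i' L).count a + 1 := by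
  have hdet : ∀ p ∈ Set.Ici t, ∀ p' ∈ Set.Ici t, kProfile 1 (factorAt ω p L) =
      kProfile 1 (factorAt ω p' L) → (factorAt ω p L).count a = (factorAt ω p' L).count a :=
    fun _ _ _ _ h => by simpa using count_factorAt_eq_of_kProfile_eq a le_rfl h
  exact Nat.le_add_one_of_ncard_image_Ici_le_two (fun l => count_factorAt_succ_le ω a l L)
    ((tailClasses_finite ω 1 L t).image_of_determines hdet)
    ((Set.ncard_image_le_of_determines (tailClasses_finite ω 1 L t) hdet).trans h) hi hi'

lemma exists_two_letters_of_kabComplexity_one {k : ℕ} (hk : 1 ≤ k) (h : kabComplexity ω k 1 = 2) :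
    ∃ a b : A, a ≠ b ∧ ∀ i, ω i = a ∨ ω i = b := by
  have hcard : (ω '' Set.Ici 0).ncard = 2 := by
    rw [← h, kabComplexity_eq_ncard_tailClasses]
    refine le_antisymm ?_ ?_
    · exact Set.ncard_image_le_of_determines (tailClasses_finite ω k 1 0) fun i _ i' _ he => by
        simpa [factorAt_one] using factorAt_eq_of_kProfile_eq le_rfl hk he
    · exact Set.ncard_image_le_of_determines (Set.toFinite _) fun i _ i' _ he => by
        simp [factorAt_one, he]
  obtain ⟨a, b, hab, hset⟩ := Set.ncard_eq_two.1 hcard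
  refine ⟨a, b, hab, fun i => ?_⟩
  have hmem : ω i ∈ ω '' Set.Ici 0 := ⟨i, Nat.zero_le i, rfl⟩
  rw [hset] at hmem
  simpa using hmem

variable {a b : A} {j : ℕ}

lemma exists_ge_count_factorAt_eq (hap : ¬ UltimatelyPeriodic ω) (hab : a ≠ b)
    (hω : ∀ i, ω i = a ∨ ω i = b)
    (hq : ∀ n, 1 ≤ n → kabComplexity ω (j + 1) n = if n < 2 * (j + 1) then n + 1 else 2 * (j + 1))
    {L : ℕ} (hL : 1 ≤ L) (i : ℕ) :
    ∃ p ≥ j, (factorAt ω p L).count a = (factorAt ω i L).count a := by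
  rcases le_or_gt L (j + 1) with hLk | hLk
  · have hC : (tailClasses ω (j + 1) L 0).ncard ≤ L + 1 := by
      rw [← kabComplexity_eq_ncard_tailClasses, hq L hL, if_pos (by omega)]
    obtain ⟨p, hp, he⟩ := exists_ge_factorAt_eq hap hL hLk hC j i
    exact ⟨p, hp, by rw [he]⟩
  · obtain ⟨m, rfl⟩ : ∃ m, L = m + 1 + j := ⟨L - j - 1, by omega⟩
    have hC : (tailClasses ω (j + 1) (m + 1 + 2 * j) 0).ncard ≤
        (tailClasses ω (j + 1) (m + 1 + 2 * j) j).ncard := by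
      have h₁ := ncard_tailClasses_one_add_le hap (m + 1) j j
      have h₂ := two_le_ncard_tailClasses_one hap hab hω (m := m + 1) (by omega) (j + j)
      rw [← kabComplexity_eq_ncard_tailClasses, hq _ (by omega)]
      split_ifs <;> omega
    obtain ⟨p, hp, he⟩ := exists_ge_kProfile_eq_of_ncard_le hC i
    have := count_factorAt_eq_of_kProfile_eq a (by omega) he
    rw [show m + 1 + 2 * j + 1 - (j + 1) = m + 1 + j by omega] at this
    exact ⟨p, hp, this⟩

lemma count_factorAt_le_add_one (hap : ¬ UltimatelyPeriodic ω) (hab : a ≠ b)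
    (hω : ∀ i, ω i = a ∨ ω i = b)
    (hq : ∀ n, 1 ≤ n → kabComplexity ω (j + 1) n = if n < 2 * (j + 1) then n + 1 else 2 * (j + 1))
    (L i i' : ℕ) : (factorAt ω i L).count a ≤ (factorAt ω i' L).count a + 1 := by
  rcases Nat.eq_zero_or_pos L with rfl | hL
  · simp [factorAt]
  have hC : (tailClasses ω 1 L j).ncard ≤ 2 := by
    have := ncard_tailClasses_one_add_le hap L 0 j
    rw [zero_add, ← kabComplexity_eq_ncard_tailClasses, hq _ (by omega)] at this
    split_ifs at this <;> omega
  obtain ⟨p, hp, hpi⟩ := exists_ge_count_factorAt_eq hap hab hω hq hL i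
  obtain ⟨p', hp', hpi'⟩ := exists_ge_count_factorAt_eq hap hab hω hq hL i'
  have := count_factorAt_le_add_one_of_ncard_le a hC hp hp'
  omega

end Balance

theorem stmt15 {A : Type*} [Fintype A] [DecidableEq A] (ω : ℕ → A)
    (hap : ¬ UltimatelyPeriodic ω) (k : ℕ) (hk : 1 ≤ k)
    (hq : ∀ n : ℕ, 1 ≤ n → kabComplexity ω k n = if n < 2 * k then n + 1 else 2 * k) :
    ∃ a b : A, a ≠ b ∧ (∀ i, ω i = a ∨ ω i = b) ∧
      ∀ u v : List A, IsFactorOf u ω → IsFactorOf v ω → u.length = v.length →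
        ((u.count a : ℤ) - v.count a).natAbs ≤ 1 := by
  obtain ⟨j, rfl⟩ : ∃ j, k = j + 1 := ⟨k - 1, by omega⟩
  obtain ⟨a, b, hab, hω⟩ :=
    exists_two_letters_of_kabComplexity_one hk (by rw [hq 1 le_rfl, if_pos (by omega)])
  refine ⟨a, b, hab, hω, fun u v ⟨i, hu⟩ ⟨i', hv⟩ hlen => ?_⟩
  change u = factorAt ω i u.length at hu
  change v = factorAt ω i' v.length at hv
  have h₁ := count_factorAt_le_add_one hap hab hω hq u.length i i'
  have h₂ := count_factorAt_le_add_one hap hab hω hq u.length i' i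
  rw [← hu, hlen, ← hv] at h₁ h₂
  omega
end

section
/- Let k be a positive integer and ω an infinite word over a finite alphabet A. Then ω has bounded k-Abelian complexity (i.e., there is C with P^{(k)}_ω(n) ≤ C for all n) if and only if ω is (k,B)-balanced for some positive integer B, meaning that for all factors u, v of ω of equal length and all nonempty words x of length at most k, ||u|_x − |v|_x| ≤ B. -/
namespace Stmt16Aux

variable {A : Type*} [DecidableEq A]

/-- The window of `ω` of length `n` starting at position `i`. -/
def wnd (ω : ℕ → A) (n i : ℕ) : List A := (List.range n).map fun j => ω (i + j)

@[simp] lemma wnd_length (ω : ℕ → A) (n i : ℕ) : (wnd ω n i).length = n := by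
  simp [wnd]

lemma wnd_isFactorOf (ω : ℕ → A) (n i : ℕ) : IsFactorOf (wnd ω n i) ω :=
  ⟨i, by simp [wnd]⟩

lemma factor_eq_wnd {ω : ℕ → A} {u : List A} {n : ℕ} (h : IsFactorOf u ω)
    (hl : u.length = n) : ∃ i, u = wnd ω n i := by
  obtain ⟨i, hi⟩ := h
  rw [hl] at hi
  exact ⟨i, hi⟩

lemma wnd_drop (ω : ℕ → A) (n i j : ℕ) : (wnd ω n i).drop j = wnd ω (n - j) (i + j) := by
  apply List.ext_getElem
  · simp [wnd]
  · intro t h1 h2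
    simp only [wnd, List.getElem_drop, List.getElem_map, List.getElem_range]
    congr 1
    omega

lemma wnd_take (ω : ℕ → A) (n i m : ℕ) : (wnd ω n i).take m = wnd ω (min m n) i := by
  simp only [wnd, ← List.map_take, List.take_range]

lemma prefix_wnd_iff {ω : ℕ → A} {x : List A} {n i : ℕ} :
    x <+: wnd ω n i ↔ x.length ≤ n ∧ x = wnd ω x.length i := by
  constructor
  · intro h
    have hl : x.length ≤ n := by simpa using h.length_le
    refine ⟨hl, ?_⟩
    have h2 := List.prefix_iff_eq_take.mp h
    rwa [wnd_take, min_eq_left hl] at h2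
  · rintro ⟨hl, h2⟩
    have : wnd ω x.length i <+: wnd ω n i := by
      rw [← min_eq_left hl, ← wnd_take]
      exact List.take_prefix _ _
    exact h2 ▸ this

/-- Number of matches of `x` at positions `i, i+1, …, i+m-1`. -/
def cnt (ω : ℕ → A) (x : List A) (i m : ℕ) : ℕ :=
  (List.range m).countP fun j => decide (x = wnd ω x.length (i + j))

lemma occ_wnd (ω : ℕ → A) {x : List A} (hx : x ≠ []) (n i : ℕ) :
    occ (wnd ω n i) x = cnt ω x i (n + 1 - x.length) := by
  have hx1 : 1 ≤ x.length := List.length_pos_iff.mpr hx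
  rw [occ, wnd_length, ← List.countP_eq_length_filter, cnt]
  have hsplit : n + 1 = (n + 1 - x.length) + (n + 1 - (n + 1 - x.length)) := by omega
  conv_lhs => rw [hsplit, List.range_add, List.countP_append]
  have hzero : (List.countP (fun j => decide (x <+: (wnd ω n i).drop j))
      ((List.range (n + 1 - (n + 1 - x.length))).map fun t => (n + 1 - x.length) + t)) = 0 := by
    rw [List.countP_eq_zero]
    intro j hj
    simp only [List.mem_map, List.mem_range] at hj
    obtain ⟨t, _, rfl⟩ := hj
    simp only [decide_eq_true_eq]
    intro hpre
    rw [wnd_drop] at hpre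
    have := (prefix_wnd_iff.mp hpre).1
    omega
  rw [hzero, Nat.add_zero]
  apply List.countP_congr
  intro j hj
  simp only [List.mem_range] at hj
  simp only [decide_eq_true_eq]
  rw [wnd_drop]
  rw [prefix_wnd_iff]
  constructor
  · exact fun h => h.2
  · exact fun h => ⟨by omega, h⟩

lemma cnt_succ_left (ω : ℕ → A) (x : List A) (i m : ℕ) :
    cnt ω x i (m + 1) = (if x = wnd ω x.length i then 1 else 0) + cnt ω x (i + 1) m := by
  rw [cnt, List.range_succ_eq_map, List.countP_cons, List.countP_map, cnt]
  have hfun : ((fun j => decide (x = wnd ω x.length (i + j))) ∘ Nat.succ)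
      = fun j => decide (x = wnd ω x.length (i + 1 + j)) := by
    funext j
    simp only [Function.comp_apply]
    have : i + Nat.succ j = i + 1 + j := by omega
    rw [this]
  rw [hfun]
  simp only [Nat.add_zero, decide_eq_true_eq]
  split_ifs with h <;> omega

lemma cnt_succ_right (ω : ℕ → A) (x : List A) (i m : ℕ) :
    cnt ω x i (m + 1) = cnt ω x i m + (if x = wnd ω x.length (i + m) then 1 else 0) := by
  rw [cnt, List.range_succ, List.countP_append, cnt, List.countP_cons, List.countP_nil]
  simp only [decide_eq_true_eq, Nat.zero_add]

lemma cnt_step (ω : ℕ → A) (x : List A) (p m : ℕ) :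
    ((cnt ω x (p + 1) m : ℤ) - cnt ω x p m).natAbs ≤ 1 := by
  cases m with
  | zero => simp [cnt]
  | succ m =>
    have h1 := cnt_succ_left ω x p m
    have h2 := cnt_succ_right ω x (p + 1) m
    split_ifs at h1 h2 <;> omega

lemma ivt_up (f : ℕ → ℕ) (hf : ∀ p, ((f (p + 1) : ℤ) - f p).natAbs ≤ 1) :
    ∀ d i t, f i ≤ t → t ≤ f (i + d) → ∃ p, i ≤ p ∧ p ≤ i + d ∧ f p = t := by
  intro d
  induction d with
  | zero =>
    intro i t h1 h2
    have h2' : t ≤ f i := h2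
    exact ⟨i, le_refl _, by omega, by omega⟩
  | succ d ih =>
    intro i t h1 h2
    by_cases h : t ≤ f (i + d)
    · obtain ⟨p, hp1, hp2, hp3⟩ := ih i t h1 h
      exact ⟨p, hp1, by omega, hp3⟩
    · have hs := hf (i + d)
      have h2' : t ≤ f (i + d + 1) := h2
      exact ⟨i + d + 1, by omega, by omega, by omega⟩

lemma ivt_down (f : ℕ → ℕ) (hf : ∀ p, ((f (p + 1) : ℤ) - f p).natAbs ≤ 1) :
    ∀ d i t, f (i + d) ≤ t → t ≤ f i → ∃ p, i ≤ p ∧ p ≤ i + d ∧ f p = t := by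
  intro d
  induction d with
  | zero =>
    intro i t h1 h2
    have h1' : f i ≤ t := h1
    exact ⟨i, le_refl _, by omega, by omega⟩
  | succ d ih =>
    intro i t h1 h2
    by_cases h : f (i + d) ≤ t
    · obtain ⟨p, hp1, hp2, hp3⟩ := ih i t h h2
      exact ⟨p, hp1, by omega, hp3⟩
    · have hs := hf (i + d)
      have h1' : f (i + d + 1) ≤ t := h1
      exact ⟨i + d + 1, by omega, by omega, by omega⟩

instance factorSubtypeFinite [Finite A] (ω : ℕ → A) (n : ℕ) :
    Finite {u : List A // u.length = n ∧ IsFactorOf u ω} := by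
  have : Finite {l : List A // l.length ≤ n} := (List.finite_length_le A n).to_subtype
  exact Finite.of_injective
    (fun u : {u : List A // u.length = n ∧ IsFactorOf u ω} =>
      (⟨u.1, le_of_eq u.2.1⟩ : {l : List A // l.length ≤ n}))
    (by intro a b h; simp only [Subtype.mk.injEq] at h; exact Subtype.ext h)

lemma card_lemma [Finite A] (ω : ℕ → A) (k n : ℕ) {x : List A} (hx : x ≠ [])
    (hxk : x.length ≤ k) (lo hi : ℕ)
    (h : ∀ t, lo ≤ t → t ≤ hi → ∃ p, occ (wnd ω n p) x = t) :
    hi + 1 ≤ lo + kabComplexity ω k n := by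
  rcases lt_or_ge hi lo with hlt | hle
  · omega
  choose p hp using fun (t : ↥(Finset.Icc lo hi)) =>
    h t.1 (Finset.mem_Icc.mp t.2).1 (Finset.mem_Icc.mp t.2).2
  let f : ↥(Finset.Icc lo hi) → Quotient (factorSetoid ω k n) :=
    fun t => Quotient.mk _ ⟨wnd ω n (p t), wnd_length ω n _, wnd_isFactorOf ω n _⟩
  have hinj : Function.Injective f := by
    intro s t hst
    have heq : KAbEq k (wnd ω n (p s)) (wnd ω n (p t)) := Quotient.exact hst
    have h2 : occ (wnd ω n (p s)) x = occ (wnd ω n (p t)) x := heq x hx hxk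
    apply Subtype.ext
    rw [← hp s, ← hp t, h2]
  have hcard := Nat.card_le_card_of_injective f hinj
  rw [Nat.card_eq_finsetCard, Nat.card_Icc] at hcard
  have : Nat.card (Quotient (factorSetoid ω k n)) = kabComplexity ω k n := rfl
  omega

lemma classes_lower [Finite A] (ω : ℕ → A) (k n : ℕ) {x : List A}
    (hx : x ≠ []) (hxk : x.length ≤ k) (i j : ℕ) :
    ((occ (wnd ω n i) x : ℤ) - occ (wnd ω n j) x).natAbs + 1 ≤ kabComplexity ω k n := by
  set g : ℕ → ℕ := fun p => occ (wnd ω n p) x with hg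
  have hstep : ∀ p, ((g (p + 1) : ℤ) - g p).natAbs ≤ 1 := by
    intro p
    simp only [hg, occ_wnd ω hx]
    exact cnt_step ω x p _
  have main : ∀ a b : ℕ, g a ≤ g b → g b + 1 ≤ g a + kabComplexity ω k n := by
    intro a b hab
    apply card_lemma ω k n hx hxk
    intro t h1 h2
    rcases le_or_gt a b with h | h
    · obtain ⟨q, _, _, hq⟩ := ivt_up g hstep (b - a) a t h1 (by rwa [Nat.add_sub_cancel' h])
      exact ⟨q, hq⟩
    · obtain ⟨q, _, _, hq⟩ := ivt_down g hstep (a - b) b t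
        (by rwa [Nat.add_sub_cancel' h.le]) h2
      exact ⟨q, hq⟩
  rcases le_or_gt (g i) (g j) with h | h
  · have := main i j h
    have hgi : g i = occ (wnd ω n i) x := rfl
    have hgj : g j = occ (wnd ω n j) x := rfl
    omega
  · have := main j i h.le
    have hgi : g i = occ (wnd ω n i) x := rfl
    have hgj : g j = occ (wnd ω n j) x := rfl
    omega

end Stmt16Aux

open Stmt16Aux in
theorem stmt16 {A : Type*} [Fintype A] [DecidableEq A] (ω : ℕ → A) (k : ℕ) (hk : 1 ≤ k) :
    (∃ C : ℕ, ∀ n : ℕ, kabComplexity ω k n ≤ C) ↔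
      ∃ B : ℕ, 1 ≤ B ∧ ∀ u v : List A, IsFactorOf u ω → IsFactorOf v ω →
        u.length = v.length → ∀ x : List A, x ≠ [] → x.length ≤ k →
          ((occ u x : ℤ) - occ v x).natAbs ≤ B := by
  constructor
  · rintro ⟨C, hC⟩
    refine ⟨C + 1, by omega, ?_⟩
    intro u v hu hv hlen x hx hxk
    obtain ⟨i, hui⟩ := factor_eq_wnd hu rfl
    obtain ⟨j, hvj⟩ := factor_eq_wnd hv hlen.symm
    have h := classes_lower ω k u.length hx hxk i j
    rw [← hui, ← hvj] at h
    have h2 := hC u.length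
    omega
  · rintro ⟨B, hB, hbal⟩
    haveI : Finite {x : List A // x ≠ [] ∧ x.length ≤ k} := by
      have : Finite {l : List A // l.length ≤ k} := (List.finite_length_le A k).to_subtype
      exact Finite.of_injective
        (fun x : {x : List A // x ≠ [] ∧ x.length ≤ k} =>
          (⟨x.1, x.2.2⟩ : {l : List A // l.length ≤ k}))
        (by intro a b h; simp only [Subtype.mk.injEq] at h; exact Subtype.ext h)
    refine ⟨Nat.card ({x : List A // x ≠ [] ∧ x.length ≤ k} →
      (Finset.Icc (-(B : ℤ)) (B : ℤ))), ?_⟩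
    intro n
    have memIcc : ∀ (u : {u : List A // u.length = n ∧ IsFactorOf u ω})
        (x : {x : List A // x ≠ [] ∧ x.length ≤ k}),
        (occ u.1 x.1 : ℤ) - occ (wnd ω n 0) x.1 ∈ Finset.Icc (-(B : ℤ)) (B : ℤ) := by
      intro u x
      have := hbal u.1 (wnd ω n 0) u.2.2 (wnd_isFactorOf ω n 0)
        (by rw [u.2.1, wnd_length]) x.1 x.2.1 x.2.2
      rw [Finset.mem_Icc]
      omega
    let Φ : Quotient (factorSetoid ω k n) →
        ({x : List A // x ≠ [] ∧ x.length ≤ k} → (Finset.Icc (-(B : ℤ)) (B : ℤ))) :=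
      Quotient.lift (fun u => fun x => (⟨_, memIcc u x⟩ : (Finset.Icc (-(B : ℤ)) (B : ℤ))))
        (by
          intro a b hab
          funext x
          apply Subtype.ext
          show (occ a.1 x.1 : ℤ) - occ (wnd ω n 0) x.1 = (occ b.1 x.1 : ℤ) - occ (wnd ω n 0) x.1
          rw [hab x.1 x.2.1 x.2.2])
    have hinj : Function.Injective Φ := by
      intro a b
      refine Quotient.inductionOn₂ a b ?_
      intro ua ub h
      apply Quotient.sound
      intro x hx hxk
      have h1 := congrArg Subtype.val (congrFun h ⟨x, hx, hxk⟩)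
      have h2 : (occ ua.1 x : ℤ) - occ (wnd ω n 0) x
          = (occ ub.1 x : ℤ) - occ (wnd ω n 0) x := h1
      omega
    exact Nat.card_le_card_of_injective Φ hinj
end

section
/- Let ω be an infinite word over a finite alphabet with bounded k-Abelian complexity for a positive integer k. Then for every positive integer N, ω contains a k-Abelian N-power, i.e., a factor U = U₁U₂⋯U_N with all U_i nonempty, of equal length, and pairwise k-Abelian equivalent. -/
/-!
Write `S_x(m)` for the number of occurrences of `x` in `ω` starting before position `m`. The
factor of length `ℓ` at `i` contains `S_x(i + ℓ + 1 - |x|) - S_x(i)` occurrences of `x`. As `i`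
varies, this count moves by at most one per step, and it is constant on `k`-Abelian classes, so
it takes at most `C` values and any two of them differ by less than `C`. Colour `m` by the
residues modulo `C + 1` of `S_x(m)` and `S_x(m + 1 - |x|)` for all `|x| ≤ k`. Van der Waerden's
theorem gives a monochromatic progression `i, i + ℓ, …, i + Nℓ`; along it the occurrence counts
of each `x` in the consecutive blocks of length `ℓ` are congruent modulo `C + 1`, hence equal.
-/

open Finset

lemma Set.uIcc_subset_range_of_step_le_one {f : ℕ → ℕ}
    (hf : ∀ t, f (t + 1) ≤ f t + 1 ∧ f t ≤ f (t + 1) + 1) (a b : ℕ) :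
    Set.uIcc (f a) (f b) ⊆ Set.range f := by
  wlog hab : a ≤ b generalizing a b
  · rw [Set.uIcc_comm]
    exact this b a (by omega)
  induction b, hab using Nat.le_induction with
  | base => simp
  | succ b _ ih =>
    intro v hv
    by_cases hvb : v ∈ Set.uIcc (f a) (f b)
    · exact ih hvb
    · have := hf b
      rw [Set.mem_uIcc] at hv hvb
      exact ⟨b + 1, by omega⟩

lemma natAbs_sub_lt_ncard_of_step_le_one {f : ℕ → ℕ}
    (hf : ∀ t, f (t + 1) ≤ f t + 1 ∧ f t ≤ f (t + 1) + 1) {V : Set ℕ}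
    (hV : Set.range f ⊆ V) (hVfin : V.Finite) (a b : ℕ) :
    ((f b : ℤ) - f a).natAbs < V.ncard := by
  have := Set.ncard_le_ncard ((Set.uIcc_subset_range_of_step_le_one hf a b).trans hV) hVfin
  rw [Set.ncard_uIcc_nat] at this
  omega

namespace KAbelian

variable {A : Type*}

def factor (ω : ℕ → A) (i n : ℕ) : List A := (List.range n).map fun j => ω (i + j)

@[simp] lemma length_factor (ω : ℕ → A) (i n : ℕ) : (factor ω i n).length = n := by
  simp [factor]

lemma drop_factor (ω : ℕ → A) (i n q : ℕ) :
    (factor ω i n).drop q = factor ω (i + q) (n - q) := by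
  apply List.ext_getElem (by simp)
  intro t _ _
  simp [factor, add_assoc]

lemma isFactorOf_factor (ω : ℕ → A) (i n : ℕ) : IsFactorOf (factor ω i n) ω :=
  ⟨i, by rw [length_factor]; rfl⟩

def OccursAt (ω : ℕ → A) (x : List A) (p : ℕ) : Prop := factor ω p x.length = x

lemma prefix_factor_iff {ω : ℕ → A} {x : List A} {i n : ℕ} :
    x <+: factor ω i n ↔ x.length ≤ n ∧ OccursAt ω x i := by
  rw [List.prefix_iff_eq_take, OccursAt, factor, factor, ← List.map_take, List.take_range]
  constructor
  · intro h
    have hlen : x.length ≤ n := by simpa using congrArg List.length h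
    rw [min_eq_left hlen] at h
    exact ⟨hlen, h.symm⟩
  · rintro ⟨hlen, h⟩
    rw [min_eq_left hlen, h]

instance [Finite A] (ω : ℕ → A) (n : ℕ) :
    Finite {u : List A // u.length = n ∧ IsFactorOf u ω} :=
  ((List.finite_length_eq A n).subset fun _ hu => hu.1).to_subtype

instance [Finite A] (k : ℕ) : Finite {x : List A // x.length ≤ k} :=
  (List.finite_length_le A k).to_subtype

variable [DecidableEq A]

instance (ω : ℕ → A) (x : List A) (p : ℕ) : Decidable (OccursAt ω x p) :=
  inferInstanceAs (Decidable (_ = _))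

def occCount (ω : ℕ → A) (x : List A) (i L : ℕ) : ℕ :=
  ∑ t ∈ range L, if OccursAt ω x (i + t) then 1 else 0

lemma occCount_add (ω : ℕ → A) (x : List A) (i L M : ℕ) :
    occCount ω x i (L + M) = occCount ω x i L + occCount ω x (i + L) M := by
  simp only [occCount, sum_range_add, add_assoc]

lemma occCount_one_le (ω : ℕ → A) (x : List A) (i : ℕ) : occCount ω x i 1 ≤ 1 := by
  simp only [occCount, sum_range_one, add_zero]
  split_ifs <;> simp

lemma occCount_succ_le_and_le_succ (ω : ℕ → A) (x : List A) (L i : ℕ) :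
    occCount ω x (i + 1) L ≤ occCount ω x i L + 1 ∧
      occCount ω x i L ≤ occCount ω x (i + 1) L + 1 := by
  have hfront := occCount_add ω x i 1 L
  have hback := occCount_add ω x i L 1
  have := occCount_one_le ω x i
  have := occCount_one_le ω x (i + L)
  rw [add_comm 1 L] at hfront
  omega

lemma occ_eq_card (w x : List A) :
    occ w x = #{q ∈ range (w.length + 1) | x <+: w.drop q} := by
  simp [occ, Finset.card, Finset.filter_val, Finset.range_val, Multiset.range]

lemma occ_factor {x : List A} (hx : x ≠ []) (ω : ℕ → A) (i n : ℕ) :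
    occ (factor ω i n) x = occCount ω x i (n + 1 - x.length) := by
  have hx1 : 1 ≤ x.length := List.length_pos_iff.mpr hx
  rw [occ_eq_card, occCount, ← card_filter, length_factor]
  simp only [drop_factor, prefix_factor_iff]
  congr 1
  ext q
  simp only [mem_filter, mem_range]
  constructor
  · rintro ⟨_, _, hq⟩
    exact ⟨by omega, hq⟩
  · rintro ⟨_, hq⟩
    exact ⟨by omega, by omega, hq⟩

lemma natAbs_occ_factor_sub_lt [Finite A] {k : ℕ} {x : List A} (hx : x ≠ [])
    (hxk : x.length ≤ k) (ω : ℕ → A) (n i i' : ℕ) :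
    ((occ (factor ω i' n) x : ℤ) - occ (factor ω i n) x).natAbs < kabComplexity ω k n := by
  let occOfClass : Quotient (factorSetoid ω k n) → ℕ :=
    Quotient.lift (fun u => occ u.1 x) fun _ _ huv => huv x hx hxk
  have hrange : Set.range (fun m => occ (factor ω m n) x) ⊆ Set.range occOfClass := by
    rintro _ ⟨m, rfl⟩
    exact ⟨⟦⟨factor ω m n, length_factor ω m n, isFactorOf_factor ω m n⟩⟧, rfl⟩
  have hstep (t : ℕ) := occCount_succ_le_and_le_succ ω x (n + 1 - x.length) t
  simp only [← occ_factor hx] at hstep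
  calc _ < (Set.range occOfClass).ncard :=
        natAbs_sub_lt_ncard_of_step_le_one hstep hrange (Set.finite_range _) i i'
    _ ≤ kabComplexity ω k n := Finite.card_range_le occOfClass

lemma occ_factor_eq_of_modEq {x : List A} (hx : x ≠ []) {ω : ℕ → A} {n i i' B : ℕ}
    (hB : ((occ (factor ω i' n) x : ℤ) - occ (factor ω i n) x).natAbs < B)
    (h₀ : occCount ω x 0 i ≡ occCount ω x 0 i' [MOD B])
    (h₁ : occCount ω x 0 (i + n + 1 - x.length) ≡
      occCount ω x 0 (i' + n + 1 - x.length) [MOD B]) :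
    occ (factor ω i n) x = occ (factor ω i' n) x := by
  rw [occ_factor hx, occ_factor hx] at hB ⊢
  rcases le_or_gt x.length (n + 1) with hlen | hlen
  · have hsplit (j : ℕ) : j + n + 1 - x.length = j + (n + 1 - x.length) := by omega
    rw [hsplit, hsplit, occCount_add ω x 0 i, occCount_add ω x 0 i', zero_add, zero_add] at h₁
    refine (h₀.add_left_cancel h₁).eq_of_abs_lt ?_
    rw [Int.abs_eq_natAbs]
    exact_mod_cast hB
  · simp [Nat.sub_eq_zero_of_le hlen.le, occCount]

def prefixCountsMod (ω : ℕ → A) (k B m : ℕ) (x : {x : List A // x.length ≤ k}) :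
    ZMod B × ZMod B :=
  ((occCount ω x.1 0 m : ZMod B), (occCount ω x.1 0 (m + 1 - x.1.length) : ZMod B))

lemma kAbEq_factor_of_prefixCountsMod_eq [Finite A] {ω : ℕ → A} {k ℓ C i i' : ℕ}
    (hC : kabComplexity ω k ℓ ≤ C)
    (h₀ : prefixCountsMod ω k (C + 1) i = prefixCountsMod ω k (C + 1) i')
    (h₁ : prefixCountsMod ω k (C + 1) (i + ℓ) = prefixCountsMod ω k (C + 1) (i' + ℓ)) :
    KAbEq k (factor ω i ℓ) (factor ω i' ℓ) := by
  intro x hx hxk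
  have h₀x := (Prod.ext_iff.mp (congrFun h₀ ⟨x, hxk⟩)).1
  have h₁x := (Prod.ext_iff.mp (congrFun h₁ ⟨x, hxk⟩)).2
  simp only [prefixCountsMod, ZMod.natCast_eq_natCast_iff] at h₀x h₁x
  have hB := natAbs_occ_factor_sub_lt hx hxk ω ℓ i i'
  exact occ_factor_eq_of_modEq hx (by omega) h₀x h₁x

end KAbelian

theorem stmt18_general {A : Type*} [Fintype A] [DecidableEq A] (ω : ℕ → A) (k : ℕ)
    (hbdd : ∃ C : ℕ, ∀ n : ℕ, kabComplexity ω k n ≤ C) (N : ℕ) :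
    ∃ i ℓ : ℕ, 1 ≤ ℓ ∧ ∀ j₁ j₂ : ℕ, j₁ < N → j₂ < N →
      KAbEq k ((List.range ℓ).map fun j => ω (i + j₁ * ℓ + j))
        ((List.range ℓ).map fun j => ω (i + j₂ * ℓ + j)) := by
  obtain ⟨C, hC⟩ := hbdd
  obtain ⟨ℓ, hℓ, i, c, hc⟩ := Combinatorics.exists_mono_homothetic_copy (range (N + 1))
    (KAbelian.prefixCountsMod ω k (C + 1))
  have hmono (j : ℕ) (hj : j ≤ N) : KAbelian.prefixCountsMod ω k (C + 1) (i + j * ℓ) = c := by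
    rw [← hc j (by simpa [Nat.lt_succ_iff] using hj), smul_eq_mul]
    ring_nf
  refine ⟨i, ℓ, hℓ, fun j₁ j₂ h₁ h₂ => KAbelian.kAbEq_factor_of_prefixCountsMod_eq (hC ℓ) ?_ ?_⟩
  · rw [hmono j₁ h₁.le, hmono j₂ h₂.le]
  · rw [add_assoc, ← add_one_mul, add_assoc, ← add_one_mul, hmono (j₁ + 1) h₁,
      hmono (j₂ + 1) h₂]

theorem stmt18 {A : Type*} [Fintype A] [DecidableEq A] (ω : ℕ → A) (k : ℕ) (hk : 1 ≤ k)
    (hbdd : ∃ C : ℕ, ∀ n : ℕ, kabComplexity ω k n ≤ C) (N : ℕ) (hN : 1 ≤ N) :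
    ∃ i ℓ : ℕ, 1 ≤ ℓ ∧ ∀ j₁ j₂ : ℕ, j₁ < N → j₂ < N →
      KAbEq k ((List.range ℓ).map fun j => ω (i + j₁ * ℓ + j))
        ((List.range ℓ).map fun j => ω (i + j₂ * ℓ + j)) :=
  stmt18_general ω k hbdd N
end
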